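/- Let c and e be tripotents in a JB*-triple V. Then c ≤ e if and only if B(e,c)w = 0 for all w in the Peirce 2-space V₂(c), where B(e,c) = I − 2(e □ c) + Q_e Q_c is the Bergman operator. -/

import Mathlib

/-!
Let `V_k(c)` be the eigenspace of `c □ c` for `k / 2`. For tripotents, `c ≤ e` just says
`e - c ∈ V₀(c)`, and then `B(e,c)` vanishes on `V₂(c)` because `V₀(c)` is orthogonal to `c`
and `{V₀(c), V₂(c), V} = 0`. Conversely, decompose `e = e₂ + a + b` with `e₂ ∈ V₂(c)`, `a ∈ V₁(c)`,
`b ∈ V₀(c)`. For `w ∈ V₂(c)` the Peirce components of `B(e,c)w` are `B(e₂,c)w`, a `V₁`-term and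
`Q_a Q_c w`, so all of them vanish. At `w = Q_c (e₂ - c)` this gives `{v,v,v} = 0` for
`v = e₂ - c`, hence `e₂ = c` by anisotropy. Tripotency of `e` then puts `Q_e c = c + a` and `b`
in `V₂(e)`, and comparing the `V₁(c)`-components of `{e,e,c+a} = c + a` and `{e,e,b} = b`
leaves `{a,a,a} = 0`, so `a = 0`.
-/

open scoped ComplexConjugate

class JBStarTriple (V : Type*) [NormedAddCommGroup V] [NormedSpace ℂ V] where
  tp : V → V → V → V
  box : V → V → V →L[ℂ] V
  box_apply : ∀ a b x : V, box a b x = tp a b x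
  add_fst : ∀ a a' b c : V, tp (a + a') b c = tp a b c + tp a' b c
  smul_fst : ∀ (α : ℂ) (a b c : V), tp (α • a) b c = α • tp a b c
  symm_outer : ∀ a b c : V, tp a b c = tp c b a
  add_snd : ∀ a b b' c : V, tp a (b + b') c = tp a b c + tp a b' c
  conj_snd : ∀ (α : ℂ) (a b c : V), tp a (α • b) c = conj α • tp a b c
  jordan_identity : ∀ a b x y z : V,
    tp a b (tp x y z) = tp (tp a b x) y z - tp x (tp b a y) z + tp x y (tp a b z)
  hermitian : ∀ (a : V) (t : ℝ), ‖NormedSpace.exp ((Complex.I * (t : ℂ)) • box a a)‖ = 1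
  nonneg_spectrum : ∀ a : V, spectrum ℂ (box a a) ⊆ {z : ℂ | 0 ≤ z.re ∧ z.im = 0}
  norm_tp_le : ∀ a b c : V, ‖tp a b c‖ ≤ ‖a‖ * ‖b‖ * ‖c‖
  norm_tp_self : ∀ a : V, ‖tp a a a‖ = ‖a‖ ^ 3

namespace JBStarTriple

variable {V : Type*} [NormedAddCommGroup V] [NormedSpace ℂ V] [JBStarTriple V]

def IsTripotent (e : V) : Prop := tp e e e = e

def Orthogonal (a b : V) : Prop := ∀ x : V, tp a b x = 0

def IsMinimalTripotent (e : V) : Prop :=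
  IsTripotent e ∧ e ≠ 0 ∧ ∀ v : V, ∃ α : ℂ, tp e v e = α • e

def Peirce2 (e : V) : Set V := {x : V | tp e e x = x}

/-- `c ≤ e` for tripotents: `e - c` is a tripotent orthogonal to `c`. -/
def TripLE (c e : V) : Prop := IsTripotent (e - c) ∧ Orthogonal (e - c) c

/-- The box operator as a `ℂ`-linear map. -/
def boxL (x y : V) : V →ₗ[ℂ] V where
  toFun v := tp x y v
  map_add' u v := by
    show tp x y (u + v) = tp x y u + tp x y v
    rw [symm_outer x y (u + v), add_fst, ← symm_outer x y u, ← symm_outer x y v]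
  map_smul' α v := by
    show tp x y (α • v) = α • tp x y v
    rw [symm_outer x y (α • v), smul_fst, ← symm_outer x y v]

/-- The trace inner product `⟨x, y⟩ = Tr (x □ y)`. -/
noncomputable def trform (x y : V) : ℂ := LinearMap.trace ℂ V (boxL x y)

end JBStarTriple

namespace JBStarTriple

variable {V : Type*} [NormedAddCommGroup V] [NormedSpace ℂ V] [JBStarTriple V]

section Multilinear

variable (a b x y : V)

lemma tp_add_right : tp a b (x + y) = tp a b x + tp a b y := by
  simp only [← box_apply, map_add]

lemma tp_smul_right (α : ℂ) : tp a b (α • x) = α • tp a b x := by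
  simp only [← box_apply, map_smul]

lemma tp_sub_right : tp a b (x - y) = tp a b x - tp a b y := by
  simp only [← box_apply, map_sub]

lemma tp_zero_right : tp a b (0 : V) = 0 := by
  rw [← box_apply, map_zero]

lemma tp_zero_left : tp (0 : V) a b = 0 := by
  rw [symm_outer, tp_zero_right]

lemma tp_zero_mid : tp a (0 : V) b = 0 := by
  simpa using add_snd a 0 0 b

end Multilinear

lemma eq_zero_of_tp_self_eq_zero {a : V} (h : tp a a a = 0) : a = 0 := by
  have := norm_tp_self a
  rw [h, norm_zero, eq_comm, pow_eq_zero_iff three_ne_zero] at this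
  exact norm_eq_zero.mp this

noncomputable def peirce (c : V) (k : ℤ) : Submodule ℂ V :=
  Module.End.eigenspace (boxL c c) ((k : ℂ) / 2)

variable {a b c d e e₂ v w x y z : V} {i j k : ℤ}

lemma mem_peirce : x ∈ peirce c k ↔ tp c c x = ((k : ℂ) / 2) • x :=
  Module.End.mem_eigenspace_iff

lemma mem_peirce_two : x ∈ peirce c 2 ↔ tp c c x = x := by
  simp [mem_peirce]

lemma mem_peirce_one : x ∈ peirce c 1 ↔ tp c c x = (2⁻¹ : ℂ) • x := by
  simp [mem_peirce]

lemma mem_peirce_zero : x ∈ peirce c 0 ↔ tp c c x = 0 := by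
  simp [mem_peirce]

lemma tp_mem_peirce (hx : x ∈ peirce c i) (hy : y ∈ peirce c j) (hz : z ∈ peirce c k) :
    tp x y z ∈ peirce c (i - j + k) := by
  rw [mem_peirce] at *
  rw [jordan_identity, hx, hy, hz, smul_fst, conj_snd, tp_smul_right]
  simp only [map_div₀, map_intCast, map_ofNat]
  push_cast
  module

lemma peirce_add_add_eq_zero {x₂ x₁ x₀ : V} (h₂ : x₂ ∈ peirce c 2) (h₁ : x₁ ∈ peirce c 1)
    (h₀ : x₀ ∈ peirce c 0) (h : x₂ + x₁ + x₀ = 0) : x₂ = 0 ∧ x₁ = 0 ∧ x₀ = 0 := by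
  rw [mem_peirce_two] at h₂
  rw [mem_peirce_one] at h₁
  rw [mem_peirce_zero] at h₀
  have hD : x₂ + (2⁻¹ : ℂ) • x₁ = 0 := by
    simpa [tp_add_right, h₂, h₁, h₀, tp_zero_right] using congrArg (tp c c) h
  have hDD : x₂ + ((2⁻¹ : ℂ) * 2⁻¹) • x₁ = 0 := by
    simpa only [tp_add_right, tp_smul_right, h₂, h₁, smul_smul, tp_zero_right]
      using congrArg (tp c c) hD
  have hx₁ : x₁ = 0 := by linear_combination (norm := module) (4 : ℂ) • hD - (4 : ℂ) • hDD
  have hx₂ : x₂ = 0 := by simpa [hx₁] using hD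
  exact ⟨hx₂, hx₁, by simpa [hx₁, hx₂] using h⟩

def bergman (a b x : V) : V := x - (2 : ℂ) • tp a b x + tp a (tp b x b) a

namespace IsTripotent

variable (hc : IsTripotent c)
include hc

lemma tp_self : tp c c c = c := hc

lemma box_quad (x : V) : tp c c (tp c x c) = tp c x c := by
  have hQD := jordan_identity c c c x c
  have hDQ := jordan_identity c x c c c
  rw [hc.tp_self] at hQD hDQ
  rw [symm_outer (tp c x c), symm_outer x] at hDQ
  have h3 : (3 : ℂ) • (tp c c (tp c x c) - tp c x c) = 0 := by
    linear_combination (norm := module) hQD - hDQ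
  exact sub_eq_zero.mp ((smul_eq_zero.mp h3).resolve_left three_ne_zero)

lemma quad_quad (x : V) : tp c (tp c x c) c = (2 : ℂ) • tp c c (tp c c x) - tp c c x := by
  have h := jordan_identity x c c c c
  rw [hc.tp_self, symm_outer x, symm_outer (tp c c x)] at h
  linear_combination (norm := module) h

lemma box_cubic (x : V) :
    (2 : ℂ) • tp c c (tp c c (tp c c x)) = (3 : ℂ) • tp c c (tp c c x) - tp c c x := by
  have h := hc.box_quad (tp c x c)
  rw [hc.quad_quad, tp_sub_right, tp_smul_right] at h
  linear_combination (norm := module) h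

lemma mem_peirce_self : c ∈ peirce c 2 := mem_peirce_two.mpr hc

lemma quad_mem_peirce_two (x : V) : tp c x c ∈ peirce c 2 := mem_peirce_two.mpr (hc.box_quad x)

lemma quad_quad_of_mem_peirce_two (hw : w ∈ peirce c 2) : tp c (tp c w c) c = w := by
  rw [hc.quad_quad, mem_peirce_two.mp hw, mem_peirce_two.mp hw]
  module

/-- `c □ c` is annihilated by `2t³ - 3t² + t = t (2t - 1) (t - 1)`. -/
lemma eq_zero_of_mem_peirce (hx : x ∈ peirce c k) (hk : k < 0 ∨ 2 < k) : x = 0 := by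
  rw [mem_peirce] at hx
  have h := hc.box_cubic x
  simp only [hx, tp_smul_right, smul_smul] at h
  have hpoly : ((k : ℂ) * (k - 1) * (k - 2) / 4) • x = 0 := by
    linear_combination (norm := module) h
  have hk' : ((k * (k - 1) * (k - 2) : ℤ) : ℂ) ≠ 0 := by
    apply Int.cast_ne_zero.mpr
    apply mul_ne_zero (mul_ne_zero _ _) <;> omega
  push_cast at hk'
  exact (smul_eq_zero.mp hpoly).resolve_left (div_ne_zero hk' (by norm_num))

lemma tp_eq_zero_of_mem_peirce (hx : x ∈ peirce c i) (hy : y ∈ peirce c j) (hz : z ∈ peirce c k)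
    (h : i - j + k < 0 ∨ 2 < i - j + k) : tp x y z = 0 :=
  hc.eq_zero_of_mem_peirce (tp_mem_peirce hx hy hz) h

lemma exists_peirce_decomposition (x : V) :
    ∃ x₂ ∈ peirce c 2, ∃ x₁ ∈ peirce c 1, ∃ x₀ ∈ peirce c 0, x = x₂ + x₁ + x₀ := by
  have h := hc.box_cubic x
  refine ⟨(2 : ℂ) • tp c c (tp c c x) - tp c c x, ?_,
    (4 : ℂ) • tp c c x - (4 : ℂ) • tp c c (tp c c x), ?_,
    x - (3 : ℂ) • tp c c x + (2 : ℂ) • tp c c (tp c c x), ?_, by module⟩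
  · rw [mem_peirce_two, tp_sub_right, tp_smul_right, h]
    module
  · rw [mem_peirce_one, tp_sub_right, tp_smul_right, tp_smul_right]
    linear_combination (norm := module) (-2 : ℂ) • h
  · rw [mem_peirce_zero, tp_add_right, tp_sub_right, tp_smul_right, tp_smul_right, h]
    module

lemma orthogonal_of_mem_peirce_zero (hd : d ∈ peirce c 0) : Orthogonal d c := by
  intro x
  rw [mem_peirce_zero] at hd
  have hQd : tp c d c = 0 :=
    hc.tp_eq_zero_of_mem_peirce hc.mem_peirce_self (mem_peirce_zero.mpr hd) hc.mem_peirce_self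
      (by norm_num)
  have h₁ := jordan_identity c c d c x
  have h₂ := jordan_identity d c c c x
  rw [hd, hc.tp_self, tp_zero_left] at h₁
  rw [symm_outer d c c, hd, hQd, tp_zero_left, tp_zero_mid] at h₂
  linear_combination (norm := module) h₁ + h₂

lemma tp_self_eq_zero_of_mem_peirce_zero (hd : d ∈ peirce c 0) (y : V) : tp c d y = 0 := by
  have hdc : ∀ x, tp d c x = 0 := hc.orthogonal_of_mem_peirce_zero hd
  have h := jordan_identity d c (tp c d y) y (tp c d y)
  simp only [hdc, tp_zero_left, tp_zero_right] at h
  exact eq_zero_of_tp_self_eq_zero (by linear_combination (norm := module) h)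

lemma tp_eq_zero_of_mem_peirce_zero_of_mem_peirce_two (hd : d ∈ peirce c 0)
    (hw : w ∈ peirce c 2) (z : V) : tp d w z = 0 := by
  have hdc : ∀ x, tp d c x = 0 := hc.orthogonal_of_mem_peirce_zero hd
  have h := jordan_identity (tp c w c) c d c z
  rw [hc.quad_quad_of_mem_peirce_two hw, symm_outer _ c d] at h
  simp only [hdc, tp_zero_left, tp_zero_right] at h
  linear_combination (norm := module) h

lemma tripLE_iff_sub_mem_peirce_zero (he : IsTripotent e) :
    TripLE c e ↔ e - c ∈ peirce c 0 := by
  refine ⟨fun ⟨_, h⟩ => mem_peirce_zero.mpr ((symm_outer _ _ _).trans (h c)), fun hb => ?_⟩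
  obtain ⟨b, rfl⟩ : ∃ b, e = c + b := ⟨e - c, by abel⟩
  rw [add_sub_cancel_left] at hb
  rw [TripLE, add_sub_cancel_left]
  have hbc : ∀ x, tp b c x = 0 := hc.orthogonal_of_mem_peirce_zero hb
  have hcb : ∀ x, tp c b x = 0 := hc.tp_self_eq_zero_of_mem_peirce_zero hb
  refine ⟨?_, hc.orthogonal_of_mem_peirce_zero hb⟩
  have h : tp (c + b) (c + b) (c + b) = c + b := he
  simp only [add_fst, add_snd, tp_add_right] at h
  rw [symm_outer b b c] at h
  simp only [hc.tp_self, mem_peirce_zero.mp hb, hbc, hcb] at h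
  show tp b b b = b
  linear_combination (norm := module) h

lemma bergman_add_of_mem_peirce_zero (hb : b ∈ peirce c 0) (hw : w ∈ peirce c 2) :
    bergman (c + b) c w = 0 := by
  have hu := hc.quad_mem_peirce_two w
  have hbu : ∀ z, tp b (tp c w c) z = 0 := hc.tp_eq_zero_of_mem_peirce_zero_of_mem_peirce_two hb hu
  have hbc : ∀ x, tp b c x = 0 := hc.orthogonal_of_mem_peirce_zero hb
  unfold bergman
  simp only [add_fst, tp_add_right]
  rw [symm_outer c _ b, hc.quad_quad_of_mem_peirce_two hw, mem_peirce_two.mp hw]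
  simp only [hbu, hbc]
  module

lemma quad_tp_self_self_of_mem_peirce_two (hv : v ∈ peirce c 2) :
    tp c (tp v v c) c = tp v v c := by
  have hvvc : tp c c (tp v v c) = tp v v c := by
    simpa [mem_peirce_two] using tp_mem_peirce hv hv hc.mem_peirce_self
  have h := jordan_identity v v c c c
  rw [hc.tp_self, symm_outer _ c c, hvvc] at h
  linear_combination (norm := module) h

lemma tp_quad_of_mem_peirce_two (hv : v ∈ peirce c 2) : tp v c (tp c v c) = tp v v c := by
  have h := jordan_identity v c c v c
  rw [symm_outer v c c, mem_peirce_two.mp hv, symm_outer c v v,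
    hc.quad_tp_self_self_of_mem_peirce_two hv] at h
  linear_combination (norm := module) h

lemma bergman_add_quad (hv : v ∈ peirce c 2) : bergman (c + v) c (tp c v c) = tp v v v := by
  unfold bergman
  rw [hc.quad_quad_of_mem_peirce_two hv]
  simp only [add_fst, tp_add_right]
  rw [hc.box_quad, hc.tp_quad_of_mem_peirce_two hv, symm_outer c v v]
  module

lemma eq_of_bergman_quad_sub_eq_zero (he₂ : e₂ ∈ peirce c 2)
    (h : bergman e₂ c (tp c (e₂ - c) c) = 0) : e₂ = c := by
  have hv := hc.bergman_add_quad (sub_mem he₂ hc.mem_peirce_self)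
  rw [add_sub_cancel, h] at hv
  exact sub_eq_zero.mp (eq_zero_of_tp_self_eq_zero hv.symm)

lemma bergman_eq_zero_and_quad_eq_zero_of_bergman_add_add_eq_zero (he₂ : e₂ ∈ peirce c 2)
    (ha : a ∈ peirce c 1) (hb : b ∈ peirce c 0) (hw : w ∈ peirce c 2)
    (h : bergman (e₂ + a + b) c w = 0) : bergman e₂ c w = 0 ∧ tp a (tp c w c) a = 0 := by
  have hu := hc.quad_mem_peirce_two w
  have hbc : ∀ x, tp b c x = 0 := hc.orthogonal_of_mem_peirce_zero hb
  have hbu : ∀ z, tp b (tp c w c) z = 0 :=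
    hc.tp_eq_zero_of_mem_peirce_zero_of_mem_peirce_two hb hu
  have hsplit : bergman e₂ c w + ((-2 : ℂ) • tp a c w + (2 : ℂ) • tp e₂ (tp c w c) a)
      + tp a (tp c w c) a = 0 := by
    unfold bergman at h ⊢
    simp only [add_fst, tp_add_right, hbc, hbu] at h
    rw [symm_outer e₂ _ b, symm_outer a _ b, hbu, hbu, symm_outer a _ e₂] at h
    linear_combination (norm := module) h
  have h₂ : bergman e₂ c w ∈ peirce c 2 :=
    add_mem (sub_mem hw (Submodule.smul_mem _ _
      (by simpa using tp_mem_peirce he₂ hc.mem_peirce_self hw)))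
      (by simpa using tp_mem_peirce he₂ hu he₂)
  have h₁ : (-2 : ℂ) • tp a c w + (2 : ℂ) • tp e₂ (tp c w c) a ∈ peirce c 1 :=
    add_mem (Submodule.smul_mem _ _ (by simpa using tp_mem_peirce ha hc.mem_peirce_self hw))
      (Submodule.smul_mem _ _ (by simpa using tp_mem_peirce he₂ hu ha))
  have h₀ : tp a (tp c w c) a ∈ peirce c 0 := by simpa using tp_mem_peirce ha hu ha
  obtain ⟨hB, -, hQ⟩ := peirce_add_add_eq_zero h₂ h₁ h₀ hsplit
  exact ⟨hB, hQ⟩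

lemma quad_add_add_self (ha : a ∈ peirce c 1) (hb : b ∈ peirce c 0) (hca : tp a c a = 0) :
    tp (c + a + b) c (c + a + b) = c + a := by
  have hbc : ∀ x, tp b c x = 0 := hc.orthogonal_of_mem_peirce_zero hb
  simp only [add_fst, tp_add_right]
  rw [symm_outer a c c, symm_outer a c b, hc.tp_self, mem_peirce_one.mp ha, hca]
  simp only [hbc, mem_peirce_zero.mp hb]
  module

lemma mem_peirce_two_of_isTripotent_add_add (ha : a ∈ peirce c 1) (hb : b ∈ peirce c 0)
    (hca : tp a c a = 0) (he : IsTripotent (c + a + b)) :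
    c + a ∈ peirce (c + a + b) 2 ∧ b ∈ peirce (c + a + b) 2 := by
  have hca_e : c + a ∈ peirce (c + a + b) 2 := by
    simpa only [hc.quad_add_add_self ha hb hca] using he.quad_mem_peirce_two c
  refine ⟨hca_e, mem_peirce_two.mpr ?_⟩
  have h : tp (c + a + b) (c + a + b) (c + a + b) = c + a + b := he
  rw [tp_add_right, mem_peirce_two.mp hca_e] at h
  linear_combination (norm := module) h

lemma eq_zero_of_isTripotent_add_add (ha : a ∈ peirce c 1) (hb : b ∈ peirce c 0)
    (hca : tp a c a = 0) (he : IsTripotent (c + a + b)) : a = 0 := by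
  obtain ⟨hca_e, hb_e⟩ := hc.mem_peirce_two_of_isTripotent_add_add ha hb hca he
  rw [mem_peirce_two] at hca_e hb_e
  have hc₂ := hc.mem_peirce_self
  have hbc : ∀ x, tp b c x = 0 := hc.orthogonal_of_mem_peirce_zero hb
  have hcb : ∀ x, tp c b x = 0 := hc.tp_self_eq_zero_of_mem_peirce_zero hb
  have h₁ : tp c a b + tp a a a + tp a b b = 0 := by
    have h₂ : (2 : ℂ) • tp a a c + tp a b a ∈ peirce c 2 :=
      add_mem (Submodule.smul_mem _ _ (by simpa using tp_mem_peirce ha ha hc₂))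
        (by simpa using tp_mem_peirce ha hb ha)
    have h₁ : tp c a b + tp a a a + tp a b b ∈ peirce c 1 :=
      add_mem (add_mem (by simpa using tp_mem_peirce hc₂ ha hb)
        (by simpa using tp_mem_peirce ha ha ha)) (by simpa using tp_mem_peirce ha hb hb)
    have h₀ : tp a a b ∈ peirce c 0 := by simpa using tp_mem_peirce ha ha hb
    refine (peirce_add_add_eq_zero h₂ h₁ h₀ ?_).2.1
    simp only [add_fst, add_snd, tp_add_right] at hca_e
    rw [symm_outer c a a, symm_outer a c c, symm_outer b a c, symm_outer b a a,
      symm_outer b b c, symm_outer b b a, hc.tp_self, mem_peirce_one.mp ha, hca,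
      hc.tp_eq_zero_of_mem_peirce hc₂ ha hc₂ (by norm_num),
      hc.tp_eq_zero_of_mem_peirce ha hb hc₂ (by norm_num)] at hca_e
    simp only [hbc, hcb] at hca_e
    linear_combination (norm := module) hca_e
  have h₂ : tp c a b + tp a b b = 0 := by
    have h₁ : tp c a b + tp a b b ∈ peirce c 1 :=
      add_mem (by simpa using tp_mem_peirce hc₂ ha hb) (by simpa using tp_mem_peirce ha hb hb)
    have h₀ : tp a a b + tp b b b - b ∈ peirce c 0 :=
      sub_mem (add_mem (by simpa using tp_mem_peirce ha ha hb)
        (by simpa using tp_mem_peirce hb hb hb)) hb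
    refine (peirce_add_add_eq_zero (zero_mem _) h₁ h₀ ?_).2.1
    simp only [add_fst, add_snd] at hb_e
    rw [symm_outer a c b, mem_peirce_zero.mp hb,
      hc.tp_eq_zero_of_mem_peirce hb ha hb (by norm_num)] at hb_e
    simp only [hbc, hcb] at hb_e
    linear_combination (norm := module) hb_e
  exact eq_zero_of_tp_self_eq_zero (by linear_combination (norm := module) h₁ - h₂)

end IsTripotent

end JBStarTriple

open JBStarTriple

/-- Let `c` and `e` be tripotents in a `JB*`-triple `V`.  Then `c ≤ e` if and only if
`B(e,c)w = 0` for every `w` in the Peirce 2-space `V₂(c)`, where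
`B(e,c)w = w − 2{e,c,w} + {e,{c,w,c},e}` is the Bergman operator. -/
theorem stmt11 {V : Type*} [NormedAddCommGroup V] [NormedSpace ℂ V] [JBStarTriple V]
    (c e : V) (hc : IsTripotent c) (he : IsTripotent e) :
    TripLE c e ↔
      ∀ w ∈ Peirce2 c, w - (2 : ℂ) • tp e c w + tp e (tp c w c) e = 0 := by
  rw [hc.tripLE_iff_sub_mem_peirce_zero he]
  constructor
  · intro hb w hw
    have h := hc.bergman_add_of_mem_peirce_zero hb (mem_peirce_two.mpr hw)
    rwa [add_sub_cancel] at h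
  · intro H
    obtain ⟨e₂, he₂, a, ha, b, hb, rfl⟩ := hc.exists_peirce_decomposition e
    have hB : ∀ w ∈ peirce c 2, bergman e₂ c w = 0 ∧ tp a (tp c w c) a = 0 := fun w hw =>
      hc.bergman_eq_zero_and_quad_eq_zero_of_bergman_add_add_eq_zero he₂ ha hb hw
        (H w (mem_peirce_two.mp hw))
    obtain rfl : c = e₂ :=
      (hc.eq_of_bergman_quad_sub_eq_zero he₂ (hB _ (hc.quad_mem_peirce_two _)).1).symm
    have hca : tp a c a = 0 := by simpa [hc.tp_self] using (hB c hc.mem_peirce_self).2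
    obtain rfl : a = 0 := hc.eq_zero_of_isTripotent_add_add ha hb hca he
    simpa using hb
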